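/- arXiv:2502.00135 — 2 statements merged into one kernel-verified Lean document; each statement's English description precedes it below -/
import Mathlib

section
/- For every graph G and every tree T with k ≥ 1 edges, ex*(G, T) < (2k-1)·|V(G)|. -/
open SimpleGraph

/-- An edge coloring is proper on `H` if distinct edges of `H` sharing a vertex
receive different colors. -/
def IsProperEdgeColoring {V : Type*} (H : SimpleGraph V) (c : Sym2 V → ℕ) : Prop :=
  ∀ ⦃e₁ : Sym2 V⦄, e₁ ∈ H.edgeSet → ∀ ⦃e₂ : Sym2 V⦄, e₂ ∈ H.edgeSet →
    e₁ ≠ e₂ → (∃ v, v ∈ e₁ ∧ v ∈ e₂) → c e₁ ≠ c e₂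

/-- The graph `H`, edge colored by `c`, contains a rainbow copy of `F`:
there is an (injective) copy of `F` in `H` all of whose edges receive
pairwise distinct colors. -/
def HasRainbowCopy {V W : Type*} (H : SimpleGraph V) (c : Sym2 V → ℕ)
    (F : SimpleGraph W) : Prop :=
  ∃ f : W ↪ V, (∀ ⦃a b : W⦄, F.Adj a b → H.Adj (f a) (f b)) ∧
    ∀ ⦃a b a' b' : W⦄, F.Adj a b → F.Adj a' b' → s(a, b) ≠ s(a', b') →
      c s(f a, f b) ≠ c s(f a', f b')

/-- `H` admits a proper edge coloring with no rainbow copy of `F`. -/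
def RainbowFree {V W : Type*} (H : SimpleGraph V) (F : SimpleGraph W) : Prop :=
  ∃ c : Sym2 V → ℕ, IsProperEdgeColoring H c ∧ ¬ HasRainbowCopy H c F

/-- The rainbow extremal number `ex*(G,F)`: the maximum number of edges of a
subgraph `H` of `G` admitting a proper edge coloring with no rainbow copy of `F`. -/
noncomputable def rainbowExtremalNumber {V W : Type*} [Fintype V]
    (G : SimpleGraph V) (F : SimpleGraph W) : ℕ :=
  sSup {m | ∃ H : SimpleGraph V, H ≤ G ∧ RainbowFree H F ∧ m = H.edgeSet.ncard}

/-- The minimum degree of a subgraph, taken over its own vertex set. -/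
noncomputable def subMinDegree {V : Type*} {G : SimpleGraph V} (H : G.Subgraph) : ℕ :=
  sInf {d | ∃ v ∈ H.verts, d = (H.neighborSet v).ncard}

/-- `δ*(G,F)`: the maximum of the minimum degree over all subgraphs `H` of `G`
admitting a proper edge coloring with no rainbow copy of `F`. -/
noncomputable def rainbowMinDegree {V W : Type*} [Fintype V]
    (G : SimpleGraph V) (F : SimpleGraph W) : ℕ :=
  sSup {m | ∃ H : G.Subgraph, RainbowFree H.spanningCoe F ∧ m = subMinDegree H}

/-- The `n`-dimensional hypercube graph `Q_n`. -/
def cubeGraph (n : ℕ) : SimpleGraph (Fin n → Bool) where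
  Adj x y := {i | x i ≠ y i}.ncard = 1
  symm := by
    constructor
    intro x y h
    beta_reduce at h ⊢
    have hs : {i | y i ≠ x i} = {i | x i ≠ y i} := by ext i; simp [ne_comm]
    rw [hs]; exact h
  loopless := by
    constructor
    intro x h
    simp at h

/-- The star `K_{1,k}` with `k` edges. -/
def starGraph (k : ℕ) : SimpleGraph (Fin (k + 1)) where
  Adj i j := i ≠ j ∧ (i = 0 ∨ j = 0)
  symm := by constructor; intro i j h; exact ⟨h.1.symm, h.2.symm⟩
  loopless := by constructor; intro i h; exact h.1 rfl

/-- `G` contains a copy of `F` as a subgraph. -/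
def ContainsCopy {V W : Type*} (G : SimpleGraph V) (F : SimpleGraph W) : Prop :=
  ∃ f : W ↪ V, ∀ ⦃a b : W⦄, F.Adj a b → G.Adj (f a) (f b)

/-!
If `H` has at least `(2k-1)|V|` edges, repeatedly deleting vertices with at most `2k-2`
neighbours among the remaining ones never exhausts the edge surplus, so it stops at a nonempty
set `S` in which every vertex has at least `2k-1` neighbours. In `S` a rainbow copy of a tree
with `k` edges is built greedily, one leaf at a time: the image of the new leaf must be a
neighbour of the image `x` of its parent that avoids the at most `k-1` other vertices used so
far and, the coloring being proper, the at most `k-1` neighbours joined to `x` by an edge whose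
color is already used; `2k-1` neighbours leave room for this.
-/

open Finset

namespace SimpleGraph

variable {V : Type*} [DecidableEq V] (H : SimpleGraph V) [Fintype H.edgeSet] [LocallyFinite H]

theorem card_edgeFinset_inter_sym2_le (S : Finset V) (v : V) :
    #(H.edgeFinset ∩ S.sym2) ≤
      #(H.edgeFinset ∩ (S.erase v).sym2) + #(H.neighborFinset v ∩ S) := by
  calc #(H.edgeFinset ∩ S.sym2)
      ≤ #(H.edgeFinset ∩ (S.erase v).sym2 ∪ (H.neighborFinset v ∩ S).image (s(v, ·))) := by
        refine card_le_card fun e he => ?_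
        induction e using Sym2.ind with
        | h a b =>
          simp only [mem_inter, mem_edgeFinset, mem_edgeSet, mem_sym2_iff, Sym2.mem_iff,
            forall_eq_or_imp, forall_eq] at he
          simp only [mem_union, mem_inter, mem_edgeFinset, mem_edgeSet, mem_sym2_iff,
            Sym2.mem_iff, forall_eq_or_imp, forall_eq, mem_erase, mem_image, mem_neighborFinset]
          by_cases ha : a = v
          · subst ha; exact .inr ⟨b, ⟨he.1, he.2.2⟩, rfl⟩
          by_cases hb : b = v
          · subst hb; exact .inr ⟨a, ⟨he.1.symm, he.2.1⟩, Sym2.eq_swap⟩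
          exact .inl ⟨he.1, ⟨ha, he.2.1⟩, hb, he.2.2⟩
    _ ≤ _ := (card_union_le _ _).trans (by gcongr; exact card_image_le)

theorem exists_nonempty_forall_lt_card_neighborFinset_inter (d : ℕ) (S : Finset V)
    (hS : d * #S < #(H.edgeFinset ∩ S.sym2)) :
    ∃ S' : Finset V, S'.Nonempty ∧ ∀ v ∈ S', d < #(H.neighborFinset v ∩ S') := by
  induction S using Finset.strongInduction with
  | H S ih =>
    by_cases hmin : ∀ v ∈ S, d < #(H.neighborFinset v ∩ S)
    · refine ⟨S, ?_, hmin⟩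
      rw [← sym2_nonempty]
      exact (card_pos.mp (Nat.zero_lt_of_lt hS)).mono inter_subset_right
    push Not at hmin
    obtain ⟨v, hv, hdeg⟩ := hmin
    refine ih _ (erase_ssubset hv) ?_
    have := H.card_edgeFinset_inter_sym2_le S v
    rw [← card_erase_add_one hv, mul_add_one] at hS
    omega

theorem edgeSet_eq_insert_of_adj_iff {W : Type*} {T : SimpleGraph W} {w₀ : W}
    {w₁ : ({w₀}ᶜ : Set W)} (hleaf : ∀ w, T.Adj w₀ w ↔ w = w₁) :
    T.edgeSet = insert s(↑w₁, w₀) (Sym2.map Subtype.val '' (T.induce {w₀}ᶜ).edgeSet) := by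
  ext e
  induction e using Sym2.ind with
  | h a b =>
    have := hleaf a
    have := hleaf b
    have := T.adj_comm a b
    simp only [mem_edgeSet, Set.mem_insert_iff, Sym2.eq, Sym2.rel_iff', Prod.mk.injEq,
      Prod.swap_prod_mk, Set.mem_image, Sym2.exists, comap_adj, Function.Embedding.subtype_apply,
      Sym2.map_mk, Subtype.exists, Set.mem_compl_iff, Set.mem_singleton_iff, exists_and_left,
      exists_prop]
    grind

end SimpleGraph

def IsRainbowCopy {V W : Type*} (H : SimpleGraph V) (c : Sym2 V → ℕ) (F : SimpleGraph W)
    (f : W → V) : Prop :=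
  (∀ ⦃a b : W⦄, F.Adj a b → H.Adj (f a) (f b)) ∧ Set.InjOn (c ∘ Sym2.map f) F.edgeSet

section Rainbow

variable {V W : Type*} {H : SimpleGraph V} {c : Sym2 V → ℕ}

theorem IsRainbowCopy.hasRainbowCopy {F : SimpleGraph W} {f : W ↪ V}
    (hf : IsRainbowCopy H c F f) : HasRainbowCopy H c F :=
  ⟨f, hf.1, fun _ _ _ _ hab hab' hne heq => hne (hf.2 hab hab' heq)⟩

theorem IsProperEdgeColoring.injOn_neighborSet (hc : IsProperEdgeColoring H c) (x : V) :
    Set.InjOn (fun u => c s(x, u)) (H.neighborSet x) := by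
  intro u hu u' hu' h
  by_contra hne
  exact hc hu hu' (fun h => hne (Sym2.congr_right.mp h))
    ⟨x, Sym2.mem_mk_left _ _, Sym2.mem_mk_left _ _⟩ h

theorem IsProperEdgeColoring.exists_mem_notMem_color_notMem [DecidableEq V]
    (hc : IsProperEdgeColoring H c) {x : V} {A B : Finset V} {C : Finset ℕ}
    (hA : ∀ u ∈ A, H.Adj x u) (hxB : x ∈ B) (hcard : #B + #C ≤ #A) :
    ∃ u ∈ A, u ∉ B ∧ c s(x, u) ∉ C := by
  have hB : #(A ∩ B) < #B :=
    card_lt_card ⟨inter_subset_right, fun h => (hA x (inter_subset_left (h hxB))).ne rfl⟩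
  have hC : #(A.filter fun u => c s(x, u) ∈ C) ≤ #C :=
    card_le_card_of_injOn _ (fun u hu => (mem_filter.1 hu).2)
      ((hc.injOn_neighborSet x).mono fun u hu => hA u (mem_filter.1 hu).1)
  obtain ⟨u, huA, hu⟩ := exists_mem_notMem_of_card_lt_card
    (s := A ∩ B ∪ A.filter fun u => c s(x, u) ∈ C) (t := A) (by grw [card_union_le]; omega)
  simp only [mem_union, mem_inter, mem_filter, huA, true_and, not_or] at hu
  exact ⟨u, huA, hu⟩

variable {T : SimpleGraph W} {w₀ : W} {w₁ : ({w₀}ᶜ : Set W)}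

theorem extend_val_compl_singleton_self (f' : ({w₀}ᶜ : Set W) → V) (u : V) :
    Function.extend Subtype.val f' (fun _ => u) w₀ = u :=
  Function.extend_apply' _ _ _ fun ⟨w, hw⟩ => w.2 hw

theorem injective_extend_val_compl_singleton {f' : ({w₀}ᶜ : Set W) → V}
    (hf' : Function.Injective f') {u : V} (hu : u ∉ Set.range f') :
    Function.Injective (Function.extend Subtype.val f' fun _ => u) := by
  have hval : ∀ w : ({w₀}ᶜ : Set W), Function.extend Subtype.val f' (fun _ => u) w = f' w :=
    Subtype.val_injective.extend_apply f' _
  have hw₀ := extend_val_compl_singleton_self f' u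
  intro a b hab
  rcases eq_or_ne a w₀ with ha | ha <;> rcases eq_or_ne b w₀ with hb | hb
  · rw [ha, hb]
  · lift b to ({w₀}ᶜ : Set W) using hb
    rw [ha, hw₀, hval] at hab
    exact absurd ⟨b, hab.symm⟩ hu
  · lift a to ({w₀}ᶜ : Set W) using ha
    rw [hb, hw₀, hval] at hab
    exact absurd ⟨a, hab⟩ hu
  · lift a to ({w₀}ᶜ : Set W) using ha
    lift b to ({w₀}ᶜ : Set W) using hb
    rw [hval, hval] at hab
    rw [hf' hab]

theorem IsRainbowCopy.extend_leaf (hleaf : ∀ w, T.Adj w₀ w ↔ w = w₁)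
    {f' : ({w₀}ᶜ : Set W) → V} (hf' : IsRainbowCopy H c (T.induce {w₀}ᶜ) f') {u : V}
    (hu : H.Adj (f' w₁) u)
    (hcu : c s(f' w₁, u) ∉ (c ∘ Sym2.map f') '' (T.induce {w₀}ᶜ).edgeSet) :
    IsRainbowCopy H c T (Function.extend Subtype.val f' fun _ => u) := by
  set g := Function.extend Subtype.val f' fun _ => u
  have hg₀ : g w₀ = u := extend_val_compl_singleton_self f' u
  have hg (w : ({w₀}ᶜ : Set W)) : g w = f' w := Subtype.val_injective.extend_apply f' _ w
  have hgf : g ∘ Subtype.val = f' := funext hg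
  have hw₁₀ : s(↑w₁, w₀) ∉ Sym2.map Subtype.val '' (T.induce {w₀}ᶜ).edgeSet := by
    rintro ⟨e, -, he⟩
    exact (Sym2.mem_map.mp (he ▸ Sym2.mem_mk_right _ _)).elim fun w hw => w.2 hw.2
  have hcomp : (c ∘ Sym2.map g) ∘ Sym2.map Subtype.val = c ∘ Sym2.map f' := by
    rw [Function.comp_assoc, ← Sym2.map_comp, hgf]
  refine ⟨fun a b hab => ?_, ?_⟩
  · by_cases ha : a = w₀
    · subst ha
      rw [(hleaf b).1 hab, hg₀, hg]
      exact hu.symm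
    by_cases hb : b = w₀
    · subst hb
      rw [(hleaf a).1 hab.symm, hg₀, hg]
      exact hu
    lift a to ({w₀}ᶜ : Set W) using ha
    lift b to ({w₀}ᶜ : Set W) using hb
    rw [hg, hg]
    exact hf'.1 hab
  · rw [edgeSet_eq_insert_of_adj_iff hleaf, Set.injOn_insert hw₁₀, ← Set.image_comp, hcomp]
    refine ⟨Set.InjOn.image_of_comp (hcomp ▸ hf'.2), ?_⟩
    simpa [hg₀, hg] using hcu

theorem IsProperEdgeColoring.exists_rainbowCopy_of_isTree [DecidableEq V] [H.LocallyFinite]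
    (hc : IsProperEdgeColoring H c) {S : Finset V} (hS : S.Nonempty) {k : ℕ}
    (hdeg : ∀ v ∈ S, 2 * k - 1 ≤ #(H.neighborFinset v ∩ S)) [Fintype W] {T : SimpleGraph W}
    (hT : T.IsTree) (hW : Fintype.card W ≤ k + 1) :
    ∃ f : W ↪ V, (∀ w, f w ∈ S) ∧ IsRainbowCopy H c T f := by
  obtain ⟨n, hn⟩ : ∃ n, Fintype.card W = n + 1 :=
    Nat.exists_eq_add_one.2 (Fintype.card_pos_iff.2 hT.connected.nonempty)
  induction n generalizing W with
  | zero =>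
    have : Subsingleton W := Fintype.card_le_one_iff_subsingleton.1 hn.le
    obtain ⟨s, hs⟩ := hS
    rw [Subsingleton.elim T ⊥]
    exact ⟨⟨fun _ => s, fun a b _ => Subsingleton.elim a b⟩, fun _ => hs, fun _ _ h => h.elim,
      by simp⟩
  | succ n ih =>
    have : Nontrivial W := Fintype.one_lt_card_iff_nontrivial.1 (by omega)
    classical
    obtain ⟨w₀, hw₀⟩ := hT.exists_vert_degree_one_of_nontrivial
    obtain ⟨w₁, hw₀₁, hleaf⟩ := degree_eq_one_iff_existsUnique_adj.1 hw₀
    set T' := T.induce {w₀}ᶜ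
    have hT' : T'.IsTree :=
      ⟨hT.connected.induce_compl_singleton_of_degree_eq_one hw₀, hT.isAcyclic.induce _⟩
    have hW' : Fintype.card ({w₀}ᶜ : Set W) = n + 1 := by simp [filter_ne', hn]
    obtain ⟨f', hf'S, hf'⟩ := ih hT' (by omega) hW'
    set w₁' : ({w₀}ᶜ : Set W) := ⟨w₁, hw₀₁.ne'⟩
    have hC : #(T'.edgeFinset.image (c ∘ Sym2.map f')) ≤ n := by
      have := hT'.card_edgeFinset
      grw [card_image_le]
      omega
    obtain ⟨u, huA, huB, huC⟩ := hc.exists_mem_notMem_color_notMem (x := f' w₁')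
      (A := H.neighborFinset (f' w₁') ∩ S) (B := univ.map f')
      (C := T'.edgeFinset.image (c ∘ Sym2.map f'))
      (fun u hu => by simpa using (mem_inter.1 hu).1) (mem_map_of_mem _ (mem_univ _))
      (by have := hdeg _ (hf'S w₁'); simp only [card_map, card_univ]; omega)
    have hu : u ∉ Set.range f' := by simpa using huB
    refine ⟨⟨_, injective_extend_val_compl_singleton f'.injective hu⟩,
      ?_, hf'.extend_leaf (w₁ := w₁') (fun w => ⟨hleaf w, fun h => h ▸ hw₀₁⟩)
        (by simpa using (mem_inter.1 huA).1)
      (by rwa [← coe_edgeFinset, ← coe_image, mem_coe])⟩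
    intro w
    rcases eq_or_ne w w₀ with rfl | hw
    · simpa only [Function.Embedding.coeFn_mk, extend_val_compl_singleton_self] using
        (mem_inter.1 huA).2
    · lift w to ({w₀}ᶜ : Set W) using hw
      simpa only [Function.Embedding.coeFn_mk, Subtype.val_injective.extend_apply] using hf'S w

end Rainbow

theorem RainbowFree.ncard_edgeSet_lt {V W : Type*} [Fintype V] [Nonempty V] [Fintype W]
    {H : SimpleGraph V} {T : SimpleGraph W} (hH : RainbowFree H T) (hT : T.IsTree) {k : ℕ}
    (hk : 1 ≤ k) (hTk : T.edgeSet.ncard = k) :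
    H.edgeSet.ncard < (2 * k - 1) * Fintype.card V := by
  classical
  obtain ⟨c, hc, hno⟩ := hH
  by_contra! hle
  rw [Set.ncard_eq_toFinset_card'] at hle hTk
  have hW : Fintype.card W = k + 1 := by rw [← hT.card_edgeFinset, ← hTk]; rfl
  obtain ⟨S, hS, hdeg⟩ := H.exists_nonempty_forall_lt_card_neighborFinset_inter (2 * k - 2)
    univ <| calc
      (2 * k - 2) * #univ < (2 * k - 1) * Fintype.card V :=
        Nat.mul_lt_mul_of_pos_right (by omega) Fintype.card_pos
      _ ≤ _ := by rw [sym2_univ, inter_univ]; exact hle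
  obtain ⟨f, -, hf⟩ := hc.exists_rainbowCopy_of_isTree hS (k := k)
    (fun v hv => by have := hdeg v hv; omega) hT hW.le
  exact hno hf.hasRainbowCopy

/-- For every graph `G` and every tree `T` with `k ≥ 1` edges,
`ex*(G, T) < (2k-1) · |V(G)|`. -/
theorem stmt8 {V W : Type*} [Fintype V] [Nonempty V] [Fintype W] (G : SimpleGraph V)
    (T : SimpleGraph W) (hT : T.IsTree) (k : ℕ) (hk : 1 ≤ k)
    (hTk : T.edgeSet.ncard = k) :
    rainbowExtremalNumber G T < (2 * k - 1) * Fintype.card V := by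
  have hpos : 0 < (2 * k - 1) * Fintype.card V := Nat.mul_pos (by omega) Fintype.card_pos
  have hle : rainbowExtremalNumber G T ≤ (2 * k - 1) * Fintype.card V - 1 := by
    refine csSup_le' ?_
    rintro _ ⟨H, -, hH, rfl⟩
    exact Nat.le_sub_one_of_lt (hH.ncard_edgeSet_lt hT hk hTk)
  omega
end

section
/- Let r ≥ 3, let T be a tree with k edges with leaf-ordering x_0, x_1, ..., x_k (where x_{i'} denotes the unique earlier neighbor of x_i), and let G be a K_{2,r}-free graph with minimum degree δ(G) > 2k + r - 3 equipped with a proper edge coloring. Then for every vertex v_0 of G there exist distinct vertices v_1, v_2, ..., v_k of G, all distinct from v_0, such that: (1) whenever x_i x_j is an edge of T, v_i v_j is an edge of G; (2) the k edges v_{i'} v_i for 1 ≤ i ≤ k receive pairwise distinct colors; and (3) for 1 ≤ i ≤ k, the vertex v_i is adjacent to v_0 in G if and only if x_i is adjacent to x_0 in T. -/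
open SimpleGraph

/-!
Embed the vertices greedily in the leaf order. When `xᵢ` is to be placed, `v_{i'}` has more than
`2k + r - 3` neighbours, and at most `i - 1` of them are already used, at most `i - 1` of them are
joined to `v_{i'}` by an edge of an already used colour (the colouring is proper), and, when
`x_{i'} ≠ x₀`, at most `r - 1` of them are adjacent to `v₀` (no `K_{2,r}`). Since `i ≤ k` some
neighbour is left over, and it can serve as `vᵢ`.
-/

namespace SimpleGraph

theorem ncard_commonNeighbors_lt {V : Type*} {G : SimpleGraph V} {r : ℕ}
    (hG : ¬ completeBipartiteGraph (Fin 2) (Fin r) ⊑ G) {u w : V} (huw : u ≠ w) :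
    (G.commonNeighbors u w).ncard < r := by
  classical
  by_contra! hr
  obtain ⟨right, hright, hcard⟩ : ∃ t : Finset V, ↑t ⊆ G.commonNeighbors u w ∧ t.card = r := by
    obtain hfin | hinf := (G.commonNeighbors u w).finite_or_infinite
    · obtain ⟨t, ht, hcard⟩ :=
        Finset.exists_subset_card_eq (hr.trans_eq (Set.ncard_eq_toFinset_card _ hfin))
      exact ⟨t, by simpa using ht, hcard⟩
    · exact hinf.exists_subset_card_eq r
  refine hG (completeBipartiteGraph_isContained_iff.mpr
    ⟨{u, w}, right, by simp [huw], by simpa, fun a ha b hb ↦ ?_⟩)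
  obtain rfl | rfl : a = u ∨ a = w := by simpa using ha
  exacts [(hright hb).1, (hright hb).2]

theorem ncard_neighborSet_inter_lt {V : Type*} (G : SimpleGraph V) {a : V} {t : Set V}
    (ha : a ∈ t) (ht : t.Finite) : (G.neighborSet a ∩ t).ncard < t.ncard :=
  Set.ncard_lt_ncard
    (Set.ssubset_iff_of_subset Set.inter_subset_right |>.mpr ⟨a, ha, fun h ↦ G.irrefl h.1⟩) ht

end SimpleGraph

theorem IsProperEdgeColoring.injOn_neighborSet_s19 {V : Type*} {G : SimpleGraph V}
    {c : Sym2 V → ℕ} (hc : IsProperEdgeColoring G c) (a : V) :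
    Set.InjOn (fun u ↦ c s(a, u)) (G.neighborSet a) := by
  intro u hu w hw huw
  by_contra hne
  exact hc hu hw (fun h ↦ hne (Sym2.congr_right.mp h)) ⟨a, by simp, by simp⟩ huw

theorem IsProperEdgeColoring.ncard_neighborSet_inter_colorPreimage_le {V : Type*}
    {G : SimpleGraph V} {c : Sym2 V → ℕ} (hc : IsProperEdgeColoring G c) (a : V)
    {K : Set ℕ} (hK : K.Finite) :
    (G.neighborSet a ∩ {u | c s(a, u) ∈ K}).ncard ≤ K.ncard :=
  Set.ncard_le_ncard_of_injOn _ (fun _ hu ↦ hu.2)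
    ((hc.injOn_neighborSet_s19 a).mono Set.inter_subset_left) hK

namespace Fin

theorem Iic_succ {k : ℕ} (i : Fin k) : Set.Iic i.succ = insert i.succ (Set.Iic i.castSucc) := by
  ext l
  rw [Set.mem_insert_iff, Set.mem_Iic, Set.mem_Iic, Fin.le_castSucc_iff, le_iff_lt_or_eq, or_comm]

theorem Ioc_zero_succ {k : ℕ} (i : Fin k) :
    Set.Ioc 0 i.succ = insert i.succ (Set.Ioc 0 i.castSucc) := by
  rw [← Set.Ioi_inter_Iic, Iic_succ, Set.inter_insert_of_mem (Set.mem_Ioi.mpr (Fin.succ_pos i)),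
    Set.Ioi_inter_Iic]

theorem ncard_Iic {k : ℕ} (m : Fin (k + 1)) : (Set.Iic m).ncard = m + 1 := by
  rw [← Finset.coe_Iic, Set.ncard_coe_finset, Fin.card_Iic]

theorem ncard_Ioc_zero {k : ℕ} (m : Fin (k + 1)) : (Set.Ioc 0 m).ncard = m := by
  rw [← Finset.coe_Ioc, Set.ncard_coe_finset, Fin.card_Ioc, Fin.val_zero, Nat.sub_zero]

end Fin

section RainbowPrefix

variable {V : Type*} {G : SimpleGraph V} {c : Sym2 V → ℕ} {k : ℕ}
  {p : Fin (k + 1) → Fin (k + 1)} {v : Fin (k + 1) → V}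

/-- `v` satisfies the conclusion for the indices `0, …, m`; the tree enters only through the
parent map `p`. -/
structure IsRainbowPrefix (G : SimpleGraph V) (c : Sym2 V → ℕ) (p : Fin (k + 1) → Fin (k + 1))
    (m : Fin (k + 1)) (v : Fin (k + 1) → V) : Prop where
  injOn : Set.InjOn v (Set.Iic m)
  adj : ∀ i ∈ Set.Ioc 0 m, G.Adj (v (p i)) (v i)
  rainbow : Set.InjOn (fun i ↦ c s(v (p i), v i)) (Set.Ioc 0 m)
  adj_zero_iff : ∀ i ∈ Set.Ioc 0 m, G.Adj (v 0) (v i) ↔ p i = 0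

theorem isRainbowPrefix_zero (v0 : V) : IsRainbowPrefix G c p 0 (fun _ ↦ v0) where
  injOn _ hi _ hj _ := (Fin.le_zero_iff.mp hi).trans (Fin.le_zero_iff.mp hj).symm
  adj _ hi := absurd hi.1 (not_lt.mpr hi.2)
  rainbow _ hi := absurd hi.1 (not_lt.mpr hi.2)
  adj_zero_iff _ hi := absurd hi.1 (not_lt.mpr hi.2)

theorem parent_mem_Iic_castSucc (hp : ∀ i, 0 < i → p i < i) {i : Fin k} {l : Fin (k + 1)}
    (hl : l ∈ Set.Ioc 0 i.succ) : p l ∈ Set.Iic i.castSucc :=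
  Fin.le_castSucc_iff.mpr ((hp l hl.1).trans_le hl.2)

theorem IsRainbowPrefix.exists_extension (hc : IsProperEdgeColoring G c) {r : ℕ} (hr : 0 < r)
    (hG : ¬ completeBipartiteGraph (Fin 2) (Fin r) ⊑ G)
    (hδ : ∀ u : V, 2 * k + r - 3 < (G.neighborSet u).ncard)
    (hp : ∀ i, 0 < i → p i < i) {i : Fin k} (hv : IsRainbowPrefix G c p i.castSucc v) :
    ∃ w, G.Adj (v (p i.succ)) w ∧ w ∉ v '' Set.Iic i.castSucc ∧
      c s(v (p i.succ), w) ∉ (fun l ↦ c s(v (p l), v l)) '' Set.Ioc 0 i.castSucc ∧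
      (G.Adj (v 0) w → p i.succ = 0) := by
  have hpi : p i.succ ∈ Set.Iic i.castSucc :=
    parent_mem_Iic_castSucc hp ⟨Fin.succ_pos i, le_rfl⟩
  set a := v (p i.succ)
  set N := G.neighborSet a
  set U := v '' Set.Iic i.castSucc
  set K := (fun l ↦ c s(v (p l), v l)) '' Set.Ioc 0 i.castSucc
  set B := {u | c s(a, u) ∈ K}
  set C : Set V := if p i.succ = 0 then ∅ else G.neighborSet (v 0)
  have hU : (N ∩ U).ncard ≤ i := by
    have := (G.ncard_neighborSet_inter_lt (Set.mem_image_of_mem v hpi) (Set.toFinite U)).trans_le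
      ((Set.ncard_image_le (Set.toFinite _)).trans_eq (Fin.ncard_Iic _))
    simpa using Nat.lt_succ_iff.mp this
  have hB : (N ∩ B).ncard ≤ i :=
    (hc.ncard_neighborSet_inter_colorPreimage_le a (Set.toFinite K)).trans
      ((Set.ncard_image_le (Set.toFinite _)).trans_eq (by simp [Fin.ncard_Ioc_zero]))
  have hC : (N ∩ C).ncard < r := by
    by_cases h0 : p i.succ = 0
    · simpa [C, h0] using hr
    · have hav : a ≠ v 0 := hv.injOn.ne hpi (Fin.zero_le _) h0
      simp only [C, if_neg h0]
      exact G.ncard_commonNeighbors_lt hG hav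
  have hF : (N ∩ (U ∪ B ∪ C)).ncard ≤ (N ∩ U).ncard + (N ∩ B).ncard + (N ∩ C).ncard := by
    rw [Set.inter_union_distrib_left, Set.inter_union_distrib_left]
    exact (Set.ncard_union_le _ _).trans (Nat.add_le_add_right (Set.ncard_union_le _ _) _)
  have hN : 2 * k + r - 3 < N.ncard := hδ a
  have hik : (i : ℕ) < k := i.isLt
  obtain ⟨w, hwN, hw⟩ := Set.exists_mem_notMem_of_ncard_lt_ncard
    (s := N ∩ (U ∪ B ∪ C)) (t := N) (by omega)
    ((Set.finite_of_ncard_pos (by omega)).subset Set.inter_subset_left)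
  refine ⟨w, hwN, fun h ↦ hw ⟨hwN, .inl (.inl h)⟩, fun h ↦ hw ⟨hwN, .inl (.inr h)⟩, fun h ↦ ?_⟩
  by_contra h0
  exact hw ⟨hwN, .inr (by simpa [C, h0] using h)⟩

theorem IsRainbowPrefix.succ (hp : ∀ i, 0 < i → p i < i) {i : Fin k}
    (hv : IsRainbowPrefix G c p i.castSucc v) {w : V} (hw_adj : G.Adj (v (p i.succ)) w)
    (hw_new : w ∉ v '' Set.Iic i.castSucc)
    (hw_color : c s(v (p i.succ), w) ∉ (fun l ↦ c s(v (p l), v l)) '' Set.Ioc 0 i.castSucc)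
    (hw_zero : G.Adj (v 0) w → p i.succ = 0) :
    IsRainbowPrefix G c p i.succ (Function.update v i.succ w) := by
  set v' := Function.update v i.succ w
  have hnew : i.succ ∉ Set.Iic i.castSucc := not_le.mpr (i.castSucc_lt_succ)
  have hsub : Set.Ioc 0 i.castSucc ⊆ Set.Iic i.castSucc := Set.Ioc_subset_Iic_self
  have hsub' : Set.Ioc 0 i.castSucc ⊆ Set.Ioc 0 i.succ :=
    Set.Ioc_subset_Ioc_right i.castSucc_lt_succ.le
  have hold : Set.EqOn v' v (Set.Iic i.castSucc) :=
    fun l hl ↦ Function.update_of_ne (ne_of_mem_of_not_mem hl hnew) w v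
  have hpar : ∀ l ∈ Set.Ioc 0 i.succ, v' (p l) = v (p l) :=
    fun l hl ↦ hold (parent_mem_Iic_castSucc hp hl)
  have hcol : Set.EqOn (fun l ↦ c s(v' (p l), v' l)) (fun l ↦ c s(v (p l), v l))
      (Set.Ioc 0 i.castSucc) := fun l hl ↦ by
    simp only [hold (hsub hl), hpar l (Set.Ioc_subset_Ioc_right (i.castSucc_lt_succ).le hl)]
  have hv'0 : v' 0 = v 0 := hold (Fin.zero_le _)
  have hv'i : v' i.succ = w := Function.update_self _ _ _
  have hv'p : v' (p i.succ) = v (p i.succ) := hpar _ ⟨Fin.succ_pos i, le_rfl⟩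
  refine ⟨?_, ?_, ?_, ?_⟩
  · rw [Fin.Iic_succ, Set.injOn_insert hnew, hold.image_eq, hv'i]
    exact ⟨hv.injOn.congr hold.symm, hw_new⟩
  · rw [Fin.Ioc_zero_succ]
    rintro l (rfl | hl)
    · rwa [hv'p, hv'i]
    · rw [hold (hsub hl), hpar l (Set.Ioc_subset_Ioc_right (i.castSucc_lt_succ).le hl)]
      exact hv.adj l hl
  · rw [Fin.Ioc_zero_succ, Set.injOn_insert (fun h ↦ hnew (hsub h)), hcol.image_eq]
    exact ⟨hv.rainbow.congr hcol.symm, by simpa only [hv'p, hv'i] using hw_color⟩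
  · rw [Fin.Ioc_zero_succ]
    rintro l (rfl | hl)
    · rw [hv'0, hv'i]
      exact ⟨hw_zero, fun h ↦ by rwa [h] at hw_adj⟩
    · rw [hv'0, hold (hsub hl)]
      exact hv.adj_zero_iff l hl

theorem exists_isRainbowPrefix (hc : IsProperEdgeColoring G c) {r : ℕ} (hr : 0 < r)
    (hG : ¬ completeBipartiteGraph (Fin 2) (Fin r) ⊑ G)
    (hδ : ∀ u : V, 2 * k + r - 3 < (G.neighborSet u).ncard)
    (hp : ∀ i, 0 < i → p i < i) (v0 : V) (m : Fin (k + 1)) :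
    ∃ v, v 0 = v0 ∧ IsRainbowPrefix G c p m v := by
  induction m using Fin.induction with
  | zero => exact ⟨_, rfl, isRainbowPrefix_zero v0⟩
  | succ i ih =>
    obtain ⟨v, hv0, hv⟩ := ih
    obtain ⟨w, hw_adj, hw_new, hw_color, hw_zero⟩ := hv.exists_extension hc hr hG hδ hp
    refine ⟨Function.update v i.succ w, ?_, hv.succ hp hw_adj hw_new hw_color hw_zero⟩
    rwa [Function.update_of_ne (Fin.succ_ne_zero i).symm]

end RainbowPrefix

theorem stmt19_general {V W : Type*} (r k : ℕ) (hr : 3 ≤ r)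
    (T : SimpleGraph W)
    (x : Fin (k + 1) → W)
    (p : Fin (k + 1) → Fin (k + 1))
    (hp : ∀ i : Fin (k + 1), 0 < i.val → p i < i ∧ T.Adj (x (p i)) (x i))
    (hpu : ∀ i j : Fin (k + 1), 0 < i.val → j < i → T.Adj (x j) (x i) → j = p i)
    (G : SimpleGraph V)
    (hG : ¬ ContainsCopy G (completeBipartiteGraph (Fin 2) (Fin r)))
    (hδ : ∀ u : V, 2 * k + r - 3 < (G.neighborSet u).ncard)
    (c : Sym2 V → ℕ) (hc : IsProperEdgeColoring G c) (v0 : V) :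
    ∃ v : Fin (k + 1) → V, v 0 = v0 ∧ Function.Injective v ∧
      (∀ i j : Fin (k + 1), T.Adj (x i) (x j) → G.Adj (v i) (v j)) ∧
      (∀ i j : Fin (k + 1), 0 < i.val → 0 < j.val → i ≠ j →
        c s(v (p i), v i) ≠ c s(v (p j), v j)) ∧
      (∀ i : Fin (k + 1), 0 < i.val → (G.Adj v0 (v i) ↔ T.Adj (x 0) (x i))) := by
  obtain ⟨v, hv0, hv⟩ := exists_isRainbowPrefix hc (by omega)
    (fun h ↦ hG (isContained_iff_exists_le_comap.mp h)) hδ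
    (fun i hi ↦ (hp i (Fin.val_pos_iff.mpr hi)).1) v0 (Fin.last k)
  have hmem : ∀ i : Fin (k + 1), 0 < i.val → i ∈ Set.Ioc 0 (Fin.last k) :=
    fun i hi ↦ ⟨Fin.val_pos_iff.mp hi, Fin.le_last i⟩
  refine ⟨v, hv0, ?_, ?_, fun i j hi hj ↦ hv.rainbow.ne (hmem i hi) (hmem j hj), ?_⟩
  · simpa [← Fin.top_eq_last] using hv.injOn
  · intro i j hij
    rcases lt_trichotomy i j with h | rfl | h
    · have hj : 0 < j.val := Fin.val_pos_iff.mpr ((Fin.zero_le i).trans_lt h)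
      rw [hpu j i hj h hij]
      exact hv.adj j (hmem j hj)
    · exact absurd hij T.irrefl
    · have hi : 0 < i.val := Fin.val_pos_iff.mpr ((Fin.zero_le j).trans_lt h)
      rw [hpu i j hi h hij.symm]
      exact (hv.adj i (hmem i hi)).symm
  · intro i hi
    rw [← hv0, hv.adj_zero_iff i (hmem i hi)]
    exact ⟨fun h ↦ h ▸ (hp i hi).2, fun h ↦ (hpu i 0 hi (Fin.val_pos_iff.mp hi) h).symm⟩

/-- Let `r ≥ 3`, let `T` be a tree with `k` edges with leaf-ordering
`x₀,…,x_k` (with `x_{i'} = x (p i)` the unique earlier neighbor of `xᵢ`), and let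
`G` be a `K_{2,r}`-free properly edge-colored graph with minimum degree
`> 2k + r - 3`. Then for every vertex `v₀` there are distinct vertices
`v₁,…,v_k`, all distinct from `v₀`, such that: (1) edges of `T` map to edges of
`G`; (2) the `k` image edges receive pairwise distinct colors; (3) `vᵢ` is
adjacent to `v₀` iff `xᵢ` is adjacent to `x₀`. -/
theorem stmt19 {V W : Type*} [Fintype V] [Fintype W] (r k : ℕ) (hr : 3 ≤ r)
    (T : SimpleGraph W) (hT : T.IsTree) (hTk : T.edgeSet.ncard = k)
    (x : Fin (k + 1) → W) (hx : Function.Bijective x)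
    (p : Fin (k + 1) → Fin (k + 1))
    (hp : ∀ i : Fin (k + 1), 0 < i.val → p i < i ∧ T.Adj (x (p i)) (x i))
    (hpu : ∀ i j : Fin (k + 1), 0 < i.val → j < i → T.Adj (x j) (x i) → j = p i)
    (G : SimpleGraph V)
    (hG : ¬ ContainsCopy G (completeBipartiteGraph (Fin 2) (Fin r)))
    (hδ : ∀ u : V, 2 * k + r - 3 < (G.neighborSet u).ncard)
    (c : Sym2 V → ℕ) (hc : IsProperEdgeColoring G c) (v0 : V) :
    ∃ v : Fin (k + 1) → V, v 0 = v0 ∧ Function.Injective v ∧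
      (∀ i j : Fin (k + 1), T.Adj (x i) (x j) → G.Adj (v i) (v j)) ∧
      (∀ i j : Fin (k + 1), 0 < i.val → 0 < j.val → i ≠ j →
        c s(v (p i), v i) ≠ c s(v (p j), v j)) ∧
      (∀ i : Fin (k + 1), 0 < i.val → (G.Adj v0 (v i) ↔ T.Adj (x 0) (x i))) :=
  stmt19_general r k hr T x p hp hpu G hG hδ c hc v0
end
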